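/- Let α > −1 be a real number and let M = (C^(α),2) be the generalized Cesàro operator of order two on ℓ². Then for every n ≥ 0, M[(1/2)(n+1+α)(n+2+α)(e_n − 2 e_{n+1} + e_{n+2})] = e_n; in particular, the range of M contains every vector e_n of the standard orthonormal basis. -/

import Mathlib

/-! The columns of `M` are `2 (i + 1 - j)₊ / ((i + 1 + α)(i + 2 + α))`, and the second difference
in `j` of the tent function `(i + 1 - j)₊` is the Kronecker delta `δᵢⱼ`. Hence
`M (e_n - 2 e_{n+1} + e_{n+2}) = 2 / ((n + 1 + α)(n + 2 + α)) • e_n`, and `α > -1` makes this scalar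
invertible. -/

/-- The standard orthonormal basis vectors of `ℓ² = ℓ²(ℕ, ℂ)`. -/
noncomputable def e (n : ℕ) : lp (fun _ : ℕ => ℂ) 2 := lp.single 2 n 1

lemma e_apply (n i : ℕ) : (e n : ℕ → ℂ) i = if i = n then 1 else 0 := by
  simp [e, lp.single_apply, Pi.single_apply]

lemma inner_e_left (i : ℕ) (x : lp (fun _ : ℕ => ℂ) 2) : inner ℂ (e i) x = x i := by
  simp [e, lp.inner_single_left]

lemma ext_inner_e {x y : lp (fun _ : ℕ => ℂ) 2} (h : ∀ i, inner ℂ (e i) x = inner ℂ (e i) y) :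
    x = y :=
  lp.ext <| funext fun i => by simpa only [inner_e_left] using h i

def tent (i j : ℕ) : ℝ := if j ≤ i then (i : ℝ) + 1 - j else 0

lemma tent_second_difference (i n : ℕ) :
    tent i n - 2 * tent i (n + 1) + tent i (n + 2) = if i = n then 1 else 0 := by
  obtain h | rfl | rfl | h : i < n ∨ i = n ∨ i = n + 1 ∨ n + 2 ≤ i := by omega
  · simp only [tent, if_neg h.ne, if_neg (by omega : ¬n ≤ i), if_neg (by omega : ¬n + 1 ≤ i),
      if_neg (by omega : ¬n + 2 ≤ i)]
    ring
  · simp [tent]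
  · simp [tent]
    ring
  · simp only [tent, if_neg (by omega : i ≠ n), if_pos h, if_pos (by omega : n ≤ i),
      if_pos (by omega : n + 1 ≤ i)]
    push_cast
    ring

noncomputable def cesaroTwoEntry (α : ℝ) (i j : ℕ) : ℝ :=
  if j ≤ i then 2 * ((i : ℝ) + 1 - j) / (((i : ℝ) + 1 + α) * ((i : ℝ) + 2 + α)) else 0

lemma cesaroTwoEntry_eq (α : ℝ) (i j : ℕ) :
    cesaroTwoEntry α i j = 2 / (((i : ℝ) + 1 + α) * ((i : ℝ) + 2 + α)) * tent i j := by
  unfold cesaroTwoEntry tent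
  split_ifs <;> ring

lemma cesaroTwoEntry_second_difference (α : ℝ) (i n : ℕ) :
    cesaroTwoEntry α i n - 2 * cesaroTwoEntry α i (n + 1) + cesaroTwoEntry α i (n + 2) =
      if i = n then 2 / (((n : ℝ) + 1 + α) * ((n : ℝ) + 2 + α)) else 0 := by
  have h : cesaroTwoEntry α i n - 2 * cesaroTwoEntry α i (n + 1) + cesaroTwoEntry α i (n + 2) =
      2 / (((i : ℝ) + 1 + α) * ((i : ℝ) + 2 + α)) *
        (tent i n - 2 * tent i (n + 1) + tent i (n + 2)) := by
    simp only [cesaroTwoEntry_eq]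
    ring
  rw [h, tent_second_difference]
  split_ifs with hin
  · rw [hin, mul_one]
  · rw [mul_zero]

lemma inner_e_apply_second_difference {α : ℝ}
    {M : lp (fun _ : ℕ => ℂ) 2 →L[ℂ] lp (fun _ : ℕ => ℂ) 2}
    (hM : ∀ i j : ℕ, inner ℂ (e i) (M (e j)) = (cesaroTwoEntry α i j : ℂ)) (i n : ℕ) :
    inner ℂ (e i) (M (e n - (2 : ℂ) • e (n + 1) + e (n + 2))) =
      if i = n then ((2 / (((n : ℝ) + 1 + α) * ((n : ℝ) + 2 + α)) : ℝ) : ℂ) else 0 := by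
  simp only [map_add, map_sub, map_smul, inner_add_right, inner_sub_right, inner_smul_right, hM]
  rw_mod_cast [cesaroTwoEntry_second_difference]
  split_ifs <;> simp

/-- For the generalized Cesàro operator `M` of order two,
`M[(1/2)(n+1+α)(n+2+α)(e_n − 2e_{n+1} + e_{n+2})] = e_n` for every `n`; in
particular every basis vector `e_n` lies in the range of `M`. -/
theorem cesaro_order_two_range_contains_basis (α : ℝ) (hα : α > -1)
    (M : lp (fun _ : ℕ => ℂ) 2 →L[ℂ] lp (fun _ : ℕ => ℂ) 2)
    (hM : ∀ i j : ℕ, (inner ℂ (e i) (M (e j)) : ℂ) =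
      if j ≤ i then
        ((2 * ((i : ℝ) + 1 - j) / (((i : ℝ) + 1 + α) * ((i : ℝ) + 2 + α)) : ℝ) : ℂ)
      else 0) :
    ∀ n : ℕ,
      M ((((1 / 2) * ((n : ℝ) + 1 + α) * ((n : ℝ) + 2 + α) : ℝ) : ℂ) •
          (e n - (2 : ℂ) • e (n + 1) + e (n + 2))) = e n ∧
      e n ∈ LinearMap.range (M : lp (fun _ : ℕ => ℂ) 2 →ₗ[ℂ] lp (fun _ : ℕ => ℂ) 2) := by
  intro n
  have hEntry : ∀ i j : ℕ, inner ℂ (e i) (M (e j)) = (cesaroTwoEntry α i j : ℂ) := by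
    intro i j
    rw [hM, cesaroTwoEntry]
    split_ifs <;> simp
  have hn₁ : (0 : ℝ) < n + 1 + α := by linarith [n.cast_nonneg (α := ℝ)]
  have hn₂ : (0 : ℝ) < n + 2 + α := by linarith
  have hImage : M ((((1 / 2) * ((n : ℝ) + 1 + α) * ((n : ℝ) + 2 + α) : ℝ) : ℂ) •
      (e n - (2 : ℂ) • e (n + 1) + e (n + 2))) = e n := by
    refine ext_inner_e fun i => ?_
    rw [map_smul, inner_smul_right, inner_e_apply_second_difference hEntry, inner_e_left, e_apply]
    split_ifs
    · rw [← Complex.ofReal_mul]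
      field_simp [hn₁.ne', hn₂.ne']
      simp
    · rw [mul_zero]
  exact ⟨hImage, _, hImage⟩
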